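/- For q > 1 a real number (or as a rational function identity) and integers 1 ≤ k < r, the following identity holds: ∑_{m=r-k+1}^{r-1} [∏_{j=1}^{m-(r-k)}(q^{r-k+j}-1)/(q^j-1)] · (1/(q^{kr}-1)) · [(q^{m+1}-1)²⋯(q^r-1)²/((q-1)⋯(q^{r-m}-1))] · q^{(r-m)(r-m-1)/2} + (1/(q^{kr}-1)) · [(q^{r-k+1}-1)²⋯(q^r-1)²/((q-1)⋯(q^k-1))] · q^{k(k-1)/2} = ∏_{i=1}^{k}(q^{i+r-k}-1)/(q^i-1). -/

import Mathlib

open Finset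

noncomputable def gb (q : ℝ) : ℕ → ℕ → ℝ
  | 0, 0 => 1
  | 0, _+1 => 0
  | k+1, 0 => gb q k 0
  | k+1, s+1 => q^(s+1) * gb q k (s+1) + gb q k s

lemma gb_zero (q : ℝ) (k : ℕ) : gb q k 0 = 1 := by
  induction k with
  | zero => rfl
  | succ k ih => simpa [gb] using ih

lemma gb_of_lt (q : ℝ) : ∀ {k s : ℕ}, k < s → gb q k s = 0 := by
  intro k
  induction k with
  | zero => intro s h; obtain ⟨t, rfl⟩ : ∃ t, s = t+1 := ⟨s-1, by omega⟩; rfl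
  | succ k ih =>
    intro s h
    obtain ⟨t, rfl⟩ : ∃ t, s = t+1 := ⟨s-1, by omega⟩
    have h1 : gb q k (t+1) = 0 := ih (by omega)
    have h2 : gb q k t = 0 := ih (by omega)
    simp [gb, h1, h2]

lemma gb_key (q x : ℝ) : ∀ k, ∑ s ∈ range (k+1), gb q k s * ∏ i ∈ range s, (x - q^i) = x^k := by
  intro k
  induction k with
  | zero => simp [gb]
  | succ k ih =>
    rw [Finset.sum_range_succ']
    have h0 : gb q (k+1) 0 * ∏ i ∈ range 0, (x - q^i) = 1 := by simp [gb_zero]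
    rw [h0]
    have hsplit : ∀ s, gb q (k+1) (s+1) * ∏ i ∈ range (s+1), (x - q^i)
        = q^(s+1) * gb q k (s+1) * ∏ i ∈ range (s+1), (x - q^i)
          + gb q k s * ∏ i ∈ range (s+1), (x - q^i) := by
      intro s; simp only [gb]; ring
    rw [Finset.sum_congr rfl (fun s _ => hsplit s), Finset.sum_add_distrib]
    have e1 : ∑ s ∈ range (k+1), q^(s+1) * gb q k (s+1) * ∏ i ∈ range (s+1), (x - q^i)
        = (∑ s ∈ range (k+1), q^s * gb q k s * ∏ i ∈ range s, (x - q^i)) - 1 := by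
      have := Finset.sum_range_succ' (fun s => q^s * gb q k s * ∏ i ∈ range s, (x - q^i)) (k+1)
      rw [Finset.sum_range_succ] at this
      rw [gb_of_lt q (Nat.lt_succ_self k)] at this
      simp only [pow_zero, one_mul, gb_zero, Finset.prod_range_zero, mul_one, mul_zero,
        zero_mul, add_zero] at this
      linarith [this]
    rw [e1]
    have e2 : ∑ s ∈ range (k+1), gb q k s * ∏ i ∈ range (s+1), (x - q^i)
        = ∑ s ∈ range (k+1), (gb q k s * ∏ i ∈ range s, (x - q^i)) * (x - q^s) := by
      refine Finset.sum_congr rfl fun s _ => ?_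
      rw [Finset.prod_range_succ]; ring
    rw [e2]
    have e3 : (∑ s ∈ range (k+1), q^s * gb q k s * ∏ i ∈ range s, (x - q^i))
        + ∑ s ∈ range (k+1), (gb q k s * ∏ i ∈ range s, (x - q^i)) * (x - q^s)
        = x * ∑ s ∈ range (k+1), gb q k s * ∏ i ∈ range s, (x - q^i) := by
      rw [Finset.mul_sum, ← Finset.sum_add_distrib]
      refine Finset.sum_congr rfl fun s _ => ?_
      ring
    rw [ih] at e3
    rw [pow_succ]
    linarith [e3]

noncomputable def Fq (q : ℝ) (n : ℕ) : ℝ := ∏ j ∈ Ioc 0 n, (q^j - 1)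

lemma Fq_pos (q : ℝ) (hq : 1 < q) (n : ℕ) : 0 < Fq q n := by
  refine Finset.prod_pos fun j hj => ?_
  have h1 : 1 ≤ j := (Finset.mem_Ioc.mp hj).1
  have : 1 < q^j := one_lt_pow₀ hq (by omega)
  linarith

lemma Fq_succ (q : ℝ) (n : ℕ) : Fq q (n+1) = Fq q n * (q^(n+1) - 1) := by
  rw [Fq, Fq, Finset.prod_Ioc_succ_top (Nat.zero_le _)]

lemma Fq_split (q : ℝ) {a b : ℕ} (h : a ≤ b) :
    Fq q a * ∏ i ∈ Ioc a b, (q^i - 1) = Fq q b := by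
  rw [Fq, Fq, Finset.prod_Ioc_consecutive _ (Nat.zero_le a) h]

lemma prod_shift (q : ℝ) (a n : ℕ) :
    ∏ j ∈ Ioc 0 n, (q^(a+j) - 1) = ∏ i ∈ Ioc a (a+n), (q^i - 1) := by
  induction n with
  | zero => simp
  | succ n ih =>
    rw [Finset.prod_Ioc_succ_top (Nat.zero_le _), ih,
      show a + (n+1) = (a+n)+1 by omega,
      Finset.prod_Ioc_succ_top (by omega)]

lemma gb_diag (q : ℝ) (k : ℕ) : gb q k k = 1 := by
  induction k with
  | zero => rfl
  | succ k ih => simp [gb, gb_of_lt q (Nat.lt_succ_self k), ih]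

lemma gb_mul (q : ℝ) : ∀ k s : ℕ, s ≤ k → gb q k s * (Fq q s * Fq q (k-s)) = Fq q k := by
  intro k
  induction k with
  | zero => intro s hs; interval_cases s; simp [gb, Fq]
  | succ k ih =>
    intro s hs
    match s with
    | 0 => simp [gb_zero, Fq]
    | s+1 =>
      by_cases h : s + 1 ≤ k
      · have e1 := ih (s+1) h
        have e2 := ih s (by omega)
        have gbdef : gb q (k+1) (s+1) = q^(s+1) * gb q k (s+1) + gb q k s := rfl
        have hA : Fq q (k+1-(s+1)) = Fq q (k-(s+1)) * (q^(k-s) - 1) := by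
          rw [show k+1-(s+1) = (k-(s+1))+1 from by omega, Fq_succ,
            show k-(s+1)+1 = k-s from by omega]
        have hB : Fq q (s+1) = Fq q s * (q^(s+1) - 1) := Fq_succ q s
        have hC : Fq q (k-s) = Fq q (k-(s+1)) * (q^(k-s) - 1) := by
          rw [show k-s = (k-(s+1))+1 from by omega, Fq_succ,
            show k-(s+1)+1 = k-s from by omega]
        have hD : Fq q (k+1) = Fq q k * (q^(k+1) - 1) := Fq_succ q k
        have hpow : q^(s+1) * q^(k-s) = q^(k+1) := by
          rw [← pow_add]; congr 1; omega
        rw [hB] at e1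
        rw [hC] at e2
        rw [gbdef, hA, hB, hD]
        linear_combination (q^(s+1) * (q^(k-s) - 1)) * e1 + (q^(s+1) - 1) * e2
          + Fq q k * hpow
      · obtain rfl : k = s := by omega
        rw [gb_diag, Nat.sub_self, show Fq q 0 = 1 from by simp [Fq]]
        ring

lemma c_mul (q : ℝ) (r : ℕ) : ∀ s : ℕ, s ≤ r →
    (∏ i ∈ range s, (q^r - q^i)) * Fq q (r-s) = q^(s*(s-1)/2) * Fq q r := by
  intro s
  induction s with
  | zero => simp
  | succ s ih =>
    intro hs
    have e1 := ih (by omega)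
    have htri : (s+1)*(s+1-1)/2 = s*(s-1)/2 + s := by
      have h2 : (s+1)*s = s*(s-1) + s*2 := by
        cases s with
        | zero => rfl
        | succ t => simp [Nat.succ_sub_one]; ring
      rw [Nat.add_sub_cancel, h2, Nat.add_mul_div_right _ _ (by norm_num : 0 < 2)]
    have hpow : q^s * q^(r-s) = q^r := by rw [← pow_add]; congr 1; omega
    have hFq : Fq q (r-s) = Fq q (r-(s+1)) * (q^(r-s) - 1) := by
      rw [show r-s = (r-(s+1))+1 from by omega, Fq_succ,
        show r-(s+1)+1 = r-s from by omega]
    rw [hFq] at e1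
    rw [Finset.prod_range_succ, htri, pow_add]
    linear_combination q^s * e1 - (∏ i ∈ range s, (q^r - q^i)) * Fq q (r-(s+1)) * hpow


lemma Icc_one_eq (n : ℕ) : Finset.Icc 1 n = Finset.Ioc 0 n := Finset.Icc_add_one_left_eq_Ioc 0 n

noncomputable def Gt (q : ℝ) (k r s : ℕ) : ℝ :=
  gb q k s * (∏ i ∈ range s, (q^r - q^i)) *
    ((1/(q^(k*r) - 1)) * (Fq q r / (Fq q (r-k) * Fq q k)))

set_option maxHeartbeats 1000000 in
lemma term_eq (q : ℝ) (hq : 1 < q) (k r s : ℕ) (hk : 1 ≤ k) (hkr : k < r)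
    (hs1 : 1 ≤ s) (hsk : s ≤ k) :
    (∏ j ∈ Finset.Icc 1 ((r-s) - (r-k)), (q^(r-k+j) - 1) / (q^j - 1)) *
      (1 / (q^(k*r) - 1)) *
      ((∏ i ∈ Finset.Icc ((r-s)+1) r, (q^i - 1))^2 / ∏ j ∈ Finset.Icc 1 (r-(r-s)), (q^j - 1)) *
      q^((r-(r-s)) * ((r-(r-s)) - 1) / 2)
    = Gt q k r s := by
  have hFpos := Fq_pos q hq
  have hD : (0:ℝ) < q^(k*r) - 1 := by
    have : 1 < q^(k*r) := one_lt_pow₀ hq (Nat.mul_ne_zero (by omega) (by omega))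
    linarith
  have h1 : (r-s) - (r-k) = k - s := by omega
  have h2 : r - (r-s) = s := by omega
  rw [h1, h2]
  -- numerator of first product
  have hnum : ∏ j ∈ Finset.Icc 1 (k-s), (q^(r-k+j) - 1)
      = ∏ i ∈ Finset.Ioc (r-k) (r-s), (q^i - 1) := by
    rw [Icc_one_eq, prod_shift q (r-k) (k-s), show (r-k) + (k-s) = r - s from by omega]
  have e1 : Fq q (r-k) * ∏ i ∈ Finset.Ioc (r-k) (r-s), (q^i - 1) = Fq q (r-s) :=
    Fq_split q (by omega)
  have e2 : Fq q (r-s) * ∏ i ∈ Finset.Ioc (r-s) r, (q^i - 1) = Fq q r :=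
    Fq_split q (by omega)
  have e3 : Finset.Icc ((r-s)+1) r = Finset.Ioc (r-s) r := Finset.Icc_add_one_left_eq_Ioc _ _
  have e4 : ∏ j ∈ Finset.Icc 1 s, (q^j - 1) = Fq q s := by rw [Icc_one_eq]; rfl
  have f1 : ∏ i ∈ Finset.Ioc (r-k) (r-s), (q^i - 1) = Fq q (r-s) / Fq q (r-k) := by
    rw [eq_div_iff (ne_of_gt (hFpos (r-k)))]; linarith [e1]
  have f2 : ∏ i ∈ Finset.Ioc (r-s) r, (q^i - 1) = Fq q r / Fq q (r-s) := by
    rw [eq_div_iff (ne_of_gt (hFpos (r-s)))]; linarith [e2]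
  have f5 : gb q k s = Fq q k / (Fq q s * Fq q (k-s)) := by
    rw [eq_div_iff (ne_of_gt (mul_pos (hFpos s) (hFpos (k-s))))]
    exact gb_mul q k s hsk
  have f6 : (∏ i ∈ range s, (q^r - q^i)) = q^(s*(s-1)/2) * Fq q r / Fq q (r-s) := by
    rw [eq_div_iff (ne_of_gt (hFpos (r-s)))]
    exact c_mul q r s (by omega)
  rw [Finset.prod_div_distrib, hnum, e3, e4, Icc_one_eq,
    show (∏ j ∈ Finset.Ioc 0 (k-s), (q^j - 1)) = Fq q (k-s) from rfl, f1, f2]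
  rw [Gt, f5, f6]
  have hS : Fq q s ≠ 0 := ne_of_gt (hFpos s)
  have hKS : Fq q (k-s) ≠ 0 := ne_of_gt (hFpos (k-s))
  have hRS : Fq q (r-s) ≠ 0 := ne_of_gt (hFpos (r-s))
  have hRK : Fq q (r-k) ≠ 0 := ne_of_gt (hFpos (r-k))
  have hK : Fq q k ≠ 0 := ne_of_gt (hFpos k)
  have hDne : q^(k*r) - 1 ≠ 0 := ne_of_gt hD
  field_simp

/-- The key recursion identity in the computation of stringy E-functions of
determinantal varieties. -/
theorem stringy_recursion_identity (k r : ℕ) (hk : 1 ≤ k) (hkr : k < r)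
    (q : ℝ) (hq : 1 < q) :
    (∑ m ∈ Finset.Icc (r - k + 1) (r - 1),
        (∏ j ∈ Finset.Icc 1 (m - (r - k)), (q ^ (r - k + j) - 1) / (q ^ j - 1)) *
          (1 / (q ^ (k * r) - 1)) *
          ((∏ i ∈ Finset.Icc (m + 1) r, (q ^ i - 1)) ^ 2 /
              ∏ j ∈ Finset.Icc 1 (r - m), (q ^ j - 1)) *
          q ^ ((r - m) * (r - m - 1) / 2)) +
      (1 / (q ^ (k * r) - 1)) *
        ((∏ i ∈ Finset.Icc (r - k + 1) r, (q ^ i - 1)) ^ 2 /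
            ∏ j ∈ Finset.Icc 1 k, (q ^ j - 1)) *
        q ^ (k * (k - 1) / 2) =
      ∏ i ∈ Finset.Icc 1 k, (q ^ (i + r - k) - 1) / (q ^ i - 1) := by
  have hFpos := Fq_pos q hq
  have hD : (0:ℝ) < q^(k*r) - 1 := by
    have : 1 < q^(k*r) := one_lt_pow₀ hq (Nat.mul_ne_zero (by omega) (by omega))
    linarith
  -- the sum rewrites to ∑ s ∈ Icc 1 (k-1), Gt q k r s
  have hsum : (∑ m ∈ Finset.Icc (r - k + 1) (r - 1),
        (∏ j ∈ Finset.Icc 1 (m - (r - k)), (q ^ (r - k + j) - 1) / (q ^ j - 1)) *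
          (1 / (q ^ (k * r) - 1)) *
          ((∏ i ∈ Finset.Icc (m + 1) r, (q ^ i - 1)) ^ 2 /
              ∏ j ∈ Finset.Icc 1 (r - m), (q ^ j - 1)) *
          q ^ ((r - m) * (r - m - 1) / 2))
      = ∑ s ∈ Finset.Icc 1 (k-1), Gt q k r s := by
    refine Finset.sum_nbij' (fun m => r - m) (fun s => r - s) ?_ ?_ ?_ ?_ ?_
    · intro m hm; simp only [Finset.mem_Icc] at hm ⊢; omega
    · intro s hs; simp only [Finset.mem_Icc] at hs ⊢; omega
    · intro m hm; simp only [Finset.mem_Icc] at hm; show r - (r - m) = m; omega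
    · intro s hs; simp only [Finset.mem_Icc] at hs; show r - (r - s) = s; omega
    · intro m hm
      simp only [Finset.mem_Icc] at hm
      have := term_eq q hq k r (r - m) hk hkr (by omega) (by omega)
      rw [show r - (r - m) = m from by omega] at this
      exact this
  -- the standalone term is Gt q k r k
  have hlast : (1 / (q ^ (k * r) - 1)) *
        ((∏ i ∈ Finset.Icc (r - k + 1) r, (q ^ i - 1)) ^ 2 /
            ∏ j ∈ Finset.Icc 1 k, (q ^ j - 1)) *
        q ^ (k * (k - 1) / 2) = Gt q k r k := by
    have := term_eq q hq k r k hk hkr hk le_rfl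
    rw [show (r-k) - (r-k) = 0 from by omega, show r - (r-k) = k from by omega] at this
    simpa using this
  rw [hsum, hlast]
  -- combine into a single sum over Icc 1 k
  have hstep : (∑ s ∈ Finset.Icc 1 (k-1), Gt q k r s) + Gt q k r k
      = ∑ s ∈ Finset.Icc 1 k, Gt q k r s := by
    have h2 := Finset.sum_Icc_succ_top (f := fun s => Gt q k r s) (a := 1) (b := k - 1)
      (by omega)
    rw [show (k-1) + 1 = k from by omega] at h2
    exact h2.symm
  rw [hstep]
  -- the key sum identity
  have key2 : ∑ s ∈ Finset.Icc 1 k, gb q k s * ∏ i ∈ range s, (q^r - q^i)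
      = q^(k*r) - 1 := by
    have h := gb_key q (q^r) k
    rw [show range (k+1) = insert 0 (Finset.Icc 1 k) from by
      ext x; simp only [Finset.mem_range, Finset.mem_insert, Finset.mem_Icc]; omega] at h
    rw [Finset.sum_insert (by simp)] at h
    simp only [gb_zero, Finset.prod_range_zero, mul_one] at h
    have hp : (q^r)^k = q^(k*r) := by rw [← pow_mul, mul_comm]
    rw [hp] at h
    linarith
  -- sum of Gt
  have hGsum : ∑ s ∈ Finset.Icc 1 k, Gt q k r s
      = (q^(k*r) - 1) * ((1/(q^(k*r) - 1)) * (Fq q r / (Fq q (r-k) * Fq q k))) := by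
    simp only [Gt]
    rw [← Finset.sum_mul, key2]
  rw [hGsum]
  -- RHS
  have hR : ∏ i ∈ Finset.Icc 1 k, (q ^ (i + r - k) - 1) / (q ^ i - 1)
      = Fq q r / (Fq q (r-k) * Fq q k) := by
    have hcongr : ∏ i ∈ Finset.Icc 1 k, (q ^ (i + r - k) - 1) / (q ^ i - 1)
        = ∏ i ∈ Finset.Icc 1 k, (q ^ ((r-k) + i) - 1) / (q ^ i - 1) := by
      refine Finset.prod_congr rfl fun i hi => ?_
      simp only [Finset.mem_Icc] at hi
      rw [show i + r - k = (r-k) + i from by omega]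
    rw [hcongr, Finset.prod_div_distrib]
    have hnum : ∏ j ∈ Finset.Icc 1 k, (q^((r-k)+j) - 1)
        = ∏ i ∈ Finset.Ioc (r-k) r, (q^i - 1) := by
      rw [Icc_one_eq, prod_shift q (r-k) k, show (r-k) + k = r from by omega]
    have e1 : Fq q (r-k) * ∏ i ∈ Finset.Ioc (r-k) r, (q^i - 1) = Fq q r :=
      Fq_split q (by omega)
    have e4 : ∏ j ∈ Finset.Icc 1 k, (q^j - 1) = Fq q k := by rw [Icc_one_eq]; rfl
    rw [hnum, e4]
    have hP : ∏ i ∈ Finset.Ioc (r-k) r, (q^i - 1) = Fq q r / Fq q (r-k) := by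
      rw [eq_div_iff (ne_of_gt (hFpos (r-k)))]; linarith [e1]
    rw [hP, div_div]
  rw [hR, one_div, ← mul_assoc, mul_inv_cancel₀ (ne_of_gt hD), one_mul]
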